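/- Let $(l_1,m_1),\dots,(l_r,m_r)$ be $r\ge 1$ pairs of non-negative integers with $l_i+m_i\ge 1$ for each $i$, $l=\sum_i l_i\ge 2$, $m=\sum_i m_i\ge 2$. Then equality $(l-1)(m-1)-1 = \sum_{i=1}^r l_i m_i - \max_i(l_i+m_i)$ holds if and only if either $r=1$, or $r=2$ and $(l_1,m_1)=(l_2,m_2)=(1,1)$. -/

import Mathlib

/-!
Let `j` maximise `l j + m j`, and let `L`, `M`, `S` be the sums of `l i`, `m i`, `l i * m i` over
the other indices. Expanding, the equality becomes `l j * M + m j * L + (L * M - S) = L + M`.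
If `l j = 0`, maximality gives `S + L ≤ m j * L`, which forces `M = 0` and then `m j = 1`,
contradicting `m ≥ 2`; symmetrically `m j ≥ 1`. Hence the three nonnegative terms
`(l j - 1) * M`, `(m j - 1) * L` and `L * M - S` all vanish. Now `L * M = S` says that
`l i * m k = 0` for distinct remaining indices, and as every pair is nonzero and `L, M > 0`,
exactly one index remains, and every pair is `(1, 1)`.
-/

open Finset

theorem Finset.sum_mul_sum_eq_sum_mul_add_sum_offDiag {ι R : Type*} [CommSemiring R]
    [DecidableEq ι] (s : Finset ι) (l m : ι → R) :
    (∑ i ∈ s, l i) * (∑ i ∈ s, m i) =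
      ∑ i ∈ s, l i * m i + ∑ p ∈ s.offDiag, l p.1 * m p.2 := by
  rw [sum_mul_sum, ← sum_product', ← diag_union_offDiag,
    sum_union (disjoint_diag_offDiag s), sum_diag]

theorem Finset.sum_mul_le_sum_mul_sum {ι R : Type*} [CommSemiring R] [PartialOrder R]
    [CanonicallyOrderedAdd R] (s : Finset ι) (l m : ι → R) :
    ∑ i ∈ s, l i * m i ≤ (∑ i ∈ s, l i) * (∑ i ∈ s, m i) := by
  classical
  rw [sum_mul_sum_eq_sum_mul_add_sum_offDiag]
  exact le_self_add

theorem Finset.exists_eq_singleton_of_sum_mul_eq {ι : Type*} [DecidableEq ι] (s : Finset ι)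
    (l m : ι → ℕ) (hs : ∀ t ∈ s, 1 ≤ l t + m t) (hl : ∑ t ∈ s, l t ≠ 0)
    (hm : ∑ t ∈ s, m t ≠ 0) (h : (∑ t ∈ s, l t) * (∑ t ∈ s, m t) = ∑ t ∈ s, l t * m t) :
    ∃ i, s = {i} := by
  rw [sum_mul_sum_eq_sum_mul_add_sum_offDiag, Nat.add_eq_left, sum_eq_zero_iff] at h
  have cross : ∀ i ∈ s, ∀ k ∈ s, l i ≠ 0 → m k ≠ 0 → i = k := fun i hi k hk hli hmk ↦ by
    by_contra hik
    exact mul_ne_zero hli hmk (h (i, k) (mem_offDiag.2 ⟨hi, hk, hik⟩))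
  obtain ⟨i, hi, hli⟩ := exists_ne_zero_of_sum_ne_zero hl
  obtain ⟨k, hk, hmk⟩ := exists_ne_zero_of_sum_ne_zero hm
  obtain rfl := cross i hi k hk hli hmk
  refine ⟨i, eq_singleton_iff_unique_mem.2 ⟨hi, fun t ht ↦ ?_⟩⟩
  by_cases hlt : l t = 0
  · exact (cross i hi t ht hli (by have := hs t ht; omega)).symm
  · exact cross t ht i hi hlt hmk

section RestOfMaximum

variable {ι : Type*} {E : Finset ι} {l m : ι → ℕ} {a b : ℕ}

theorem one_le_of_rest_eq (hmax : ∀ t ∈ E, l t + m t ≤ a + b)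
    (hl : 2 ≤ a + ∑ t ∈ E, l t) (hm : 2 ≤ b + ∑ t ∈ E, m t)
    (h : a * ∑ t ∈ E, m t + b * ∑ t ∈ E, l t + (∑ t ∈ E, l t) * ∑ t ∈ E, m t =
      ∑ t ∈ E, l t + ∑ t ∈ E, m t + ∑ t ∈ E, l t * m t) :
    1 ≤ a := by
  by_contra! ha
  obtain rfl : a = 0 := by omega
  have hS : ∑ t ∈ E, l t * m t + ∑ t ∈ E, l t ≤ b * ∑ t ∈ E, l t := by
    rw [← sum_add_distrib, mul_sum]
    refine sum_le_sum fun t ht ↦ ?_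
    rcases Nat.eq_zero_or_pos (l t) with hlt | hlt
    · simp [hlt]
    · have := hmax t ht
      nlinarith
  have hSLM := sum_mul_le_sum_mul_sum E l m
  generalize ∑ t ∈ E, l t = L at *
  generalize ∑ t ∈ E, m t = M at *
  generalize ∑ t ∈ E, l t * m t = S at *
  nlinarith [Nat.mul_le_mul_right M hl, Nat.mul_le_mul_right L hm]

theorem eq_empty_or_eq_singleton_of_rest_eq [DecidableEq ι]
    (hmax : ∀ t ∈ E, l t + m t ≤ a + b) (hE : ∀ t ∈ E, 1 ≤ l t + m t)
    (hl : 2 ≤ a + ∑ t ∈ E, l t) (hm : 2 ≤ b + ∑ t ∈ E, m t)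
    (h : a * ∑ t ∈ E, m t + b * ∑ t ∈ E, l t + (∑ t ∈ E, l t) * ∑ t ∈ E, m t =
      ∑ t ∈ E, l t + ∑ t ∈ E, m t + ∑ t ∈ E, l t * m t) :
    E = ∅ ∨ a = 1 ∧ b = 1 ∧ ∃ i, E = {i} ∧ l i = 1 ∧ m i = 1 := by
  obtain ⟨a, rfl⟩ := Nat.exists_eq_add_one.2 (one_le_of_rest_eq hmax hl hm h)
  obtain ⟨b, rfl⟩ : ∃ b', b = b' + 1 := by
    refine Nat.exists_eq_add_one.2 (one_le_of_rest_eq (l := m) (m := l) (a := b) (b := a + 1)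
      (fun t ht ↦ by have := hmax t ht; omega) hm hl ?_)
    rw [sum_congr rfl fun t _ ↦ mul_comm (m t) (l t)]
    linarith
  rcases E.eq_empty_or_nonempty with hE0 | ⟨t, ht⟩
  · exact .inl hE0
  right
  have hLM : 1 ≤ ∑ t ∈ E, l t + ∑ t ∈ E, m t := by
    rw [← sum_add_distrib]
    exact (hE t ht).trans (single_le_sum (f := fun t ↦ l t + m t) (fun _ _ ↦ Nat.zero_le _) ht)
  have hSLM := sum_mul_le_sum_mul_sum E l m
  generalize hL : ∑ t ∈ E, l t = L at *
  generalize hM : ∑ t ∈ E, m t = M at *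
  generalize hS : ∑ t ∈ E, l t * m t = S at *
  have haM : a * M = 0 := by nlinarith
  have hbL : b * L = 0 := by nlinarith
  have hS_eq : L * M = S := by nlinarith
  have hL0 : L ≠ 0 := by rintro rfl; have := mul_eq_zero.1 haM; omega
  have hM0 : M ≠ 0 := by rintro rfl; have := mul_eq_zero.1 hbL; omega
  obtain rfl : a = 0 := (mul_eq_zero.1 haM).resolve_right hM0
  obtain rfl : b = 0 := (mul_eq_zero.1 hbL).resolve_right hL0
  subst hL hM hS
  obtain ⟨i, rfl⟩ := exists_eq_singleton_of_sum_mul_eq E l m hE hL0 hM0 hS_eq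
  simp only [sum_singleton] at hL0 hM0
  have := hmax i (mem_singleton_self i)
  exact ⟨rfl, rfl, i, rfl, by omega, by omega⟩

end RestOfMaximum

theorem sub_one_mul_sub_one_sub_one_eq_iff {ι : Type*} [Fintype ι] [DecidableEq ι]
    (l m : ι → ℕ) (j : ι) :
    ((∑ i, l i : ℕ) - 1 : ℤ) * ((∑ i, m i : ℕ) - 1) - 1 =
        (∑ i, (l i : ℤ) * m i) - ((l j : ℤ) + m j) ↔
      l j * ∑ t ∈ univ.erase j, m t + m j * ∑ t ∈ univ.erase j, l t +
          (∑ t ∈ univ.erase j, l t) * ∑ t ∈ univ.erase j, m t =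
        ∑ t ∈ univ.erase j, l t + ∑ t ∈ univ.erase j, m t +
          ∑ t ∈ univ.erase j, l t * m t := by
  rw [← add_sum_erase _ l (mem_univ j), ← add_sum_erase _ m (mem_univ j),
    ← add_sum_erase _ (fun i ↦ (l i : ℤ) * m i) (mem_univ j), ← Nat.cast_inj (R := ℤ)]
  push_cast
  constructor <;> intro h <;> linear_combination h

theorem stmt_1 (r : ℕ) (hr : 0 < r) (l m : Fin r → ℕ)
    (hlm : ∀ i, 1 ≤ l i + m i)
    (hl : 2 ≤ ∑ i, l i) (hm : 2 ≤ ∑ i, m i) :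
    ((∑ i, l i : ℕ) - 1 : ℤ) * ((∑ i, m i : ℕ) - 1) - 1 =
      (∑ i, (l i : ℤ) * m i) -
        Finset.univ.sup' (Finset.univ_nonempty_iff.mpr (Fin.pos_iff_nonempty.mp hr))
          (fun i => (l i : ℤ) + m i) ↔
      (r = 1 ∨ (r = 2 ∧ ∀ i, l i = 1 ∧ m i = 1)) := by
  obtain ⟨j, -, hj⟩ := exists_mem_eq_sup' (univ_nonempty_iff.mpr (Fin.pos_iff_nonempty.mp hr))
    (fun i ↦ (l i : ℤ) + m i)
  have hmax : ∀ i, l i + m i ≤ l j + m j := fun i ↦ by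
    exact_mod_cast hj ▸ le_sup' (fun i ↦ (l i : ℤ) + m i) (mem_univ i)
  rw [hj]
  constructor
  · intro h
    rw [sub_one_mul_sub_one_sub_one_eq_iff] at h
    rw [← add_sum_erase _ l (mem_univ j)] at hl
    rw [← add_sum_erase _ m (mem_univ j)] at hm
    have hcard : (univ.erase j).card = r - 1 := by simp
    rcases eq_empty_or_eq_singleton_of_rest_eq (fun t _ ↦ hmax t) (fun t _ ↦ hlm t) hl hm h with
      hE | ⟨hlj, hmj, i, hE, hli, hmi⟩
    · rw [hE, card_empty] at hcard
      omega
    · rw [hE, card_singleton] at hcard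
      refine .inr ⟨by omega, fun t ↦ ?_⟩
      by_cases htj : t = j
      · exact htj ▸ ⟨hlj, hmj⟩
      · obtain rfl : t = i := by simpa [hE] using mem_erase.2 ⟨htj, mem_univ t⟩
        exact ⟨hli, hmi⟩
  · rintro (rfl | ⟨rfl, h⟩)
    · obtain rfl := Subsingleton.elim j 0
      simp only [Fin.sum_univ_one]
      ring
    · simp [h]
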